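/- Let $d\ge 2$, $m=\lfloor d/2\rfloor$, and $k\ge d$. Define $\phi_i(d,k)=\sum_{j=0}^{m}\left[\binom{j}{d-1-i}+\binom{d-j}{d-1-i}\right]\binom{k-d+j}{j} - [d\text{ even}]\binom{m}{2m-1-i}\binom{k-m}{m}$. Then for $0\le i\le m-1$, $\phi_i(d,k)=\binom{k+1}{i+1}$. -/

import Mathlib

/-!
For `j < m` the terms `C(j, d-1-i)` vanish, and at `j = m` the term `C(m, d-1-i) C(k-m, m)` is
nonzero only for `d = 2m`, `i = m-1`, where it is exactly the subtracted correction. What remains,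
`∑ⱼ C(d-j, d-1-i) C(k-d+j, j)`, is the upper-index Vandermonde identity
`∑_{a+b=n} C(r+a, a) C(s+b, b) = C(r+s+n+1, n)`, which becomes the ordinary Chu–Vandermonde
identity for `Ring.choose` on `ℤ` after negating the upper indices: `C(r+a, a) = (-1)^a C(-r-1, a)`.
-/

/-- Integer binomial coefficient, zero outside the range `0 ≤ b ≤ a`. -/
def ch (a b : ℤ) : ℤ := if 0 ≤ b ∧ b ≤ a then ((a.toNat).choose b.toNat : ℤ) else 0

open Finset

theorem Nat.add_choose_self_eq_negOnePow_smul_choose_neg (r a : ℕ) :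
    (((r + a).choose a : ℕ) : ℤ) = Int.negOnePow a • Ring.choose (-((r : ℤ) + 1)) a := by
  rw [Ring.choose_neg, smul_smul, ← Int.negOnePow_add, Int.negOnePow_even _ (by simp), one_smul,
    show (r : ℤ) + 1 + a - 1 = ((r + a : ℕ) : ℤ) by push_cast; ring, Ring.choose_natCast]

theorem Nat.sum_antidiagonal_add_choose_mul_add_choose (r s n : ℕ) :
    ∑ ij ∈ antidiagonal n, (r + ij.1).choose ij.1 * (s + ij.2).choose ij.2 =
      (r + s + n + 1).choose n := by
  apply Nat.cast_injective (R := ℤ)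
  have hsum : ∀ ij ∈ antidiagonal n,
      (((r + ij.1).choose ij.1 * (s + ij.2).choose ij.2 : ℕ) : ℤ) = Int.negOnePow n •
        (Ring.choose (-((r : ℤ) + 1)) ij.1 * Ring.choose (-((s : ℤ) + 1)) ij.2) := by
    rintro ⟨a, b⟩ hab
    rw [HasAntidiagonal.mem_antidiagonal] at hab
    subst hab
    rw [Nat.cast_mul, Nat.add_choose_self_eq_negOnePow_smul_choose_neg,
      Nat.add_choose_self_eq_negOnePow_smul_choose_neg, smul_mul_smul_comm, Nat.cast_add,
      Int.negOnePow_add]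
  rw [Nat.cast_sum, sum_congr rfl hsum, ← smul_sum, ← Ring.add_choose_eq _ (Commute.all _ _),
    show -((r : ℤ) + 1) + -((s : ℤ) + 1) = -(((r + s + 1 : ℕ) : ℤ) + 1) by push_cast; ring,
    ← Nat.add_choose_self_eq_negOnePow_smul_choose_neg]
  ring_nf

theorem Nat.sum_range_add_sub_choose_mul_add_choose (r q p : ℕ) {M : ℕ} (hpM : p ≤ M) (hq : 0 < q) :
    ∑ j ∈ range (M + 1), (q + p - j).choose q * (r + j).choose j = (r + q + p + 1).choose p := by
  have hvanish : ∀ j ∈ range (M + 1), j ∉ range (p + 1) →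
      (q + p - j).choose q * (r + j).choose j = 0 := by
    intro j _ hj
    rw [mem_range] at hj
    rw [Nat.choose_eq_zero_of_lt (by omega), zero_mul]
  rw [← sum_subset (range_subset_range.2 (by omega)) hvanish,
    ← Nat.sum_antidiagonal_add_choose_mul_add_choose,
    Nat.sum_antidiagonal_eq_sum_range_succ (fun a b => (r + a).choose a * (q + b).choose b)]
  refine sum_congr rfl fun j hj => ?_
  rw [mem_range] at hj
  rw [mul_comm, show q + p - j = q + (p - j) by omega, Nat.choose_symm_add]

theorem ch_natCast (a b : ℕ) : ch a b = a.choose b := by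
  unfold ch
  split_ifs with h
  · simp
  · rw [Nat.choose_eq_zero_of_lt (by omega), Nat.cast_zero]

theorem ch_of_lt {a b : ℤ} (h : a < b) : ch a b = 0 := by
  unfold ch
  rw [if_neg (by omega)]

theorem ch_mul_ch_eq_ite {d m k i j : ℕ} (hm : m = d / 2) (hi : i + 1 ≤ m) (hj : j ≤ m) :
    ch j ((d : ℤ) - 1 - i) * ch ((k : ℤ) - d + j) j =
      if j = m then
        (if Even d then 1 else 0) * ch (m : ℤ) (2 * (m : ℤ) - 1 - i) * ch ((k : ℤ) - m) (m : ℤ)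
      else 0 := by
  split_ifs with hjm hd
  · rw [Nat.even_iff] at hd
    subst hjm
    rw [show (d : ℤ) - 1 - i = 2 * j - 1 - i by omega, show (k : ℤ) - d + j = k - j by omega]
    ring
  · rw [Nat.even_iff] at hd
    rw [ch_of_lt (by omega), zero_mul, zero_mul, zero_mul]
  · rw [ch_of_lt (by omega), zero_mul]

theorem ch_sub_mul_ch_eq_natCast {d k i j : ℕ} (hid : i < d) (hdk : d ≤ k) (hj : j ≤ d) :
    ch ((d : ℤ) - j) ((d : ℤ) - 1 - i) * ch ((k : ℤ) - d + j) j =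
      (((d - j).choose (d - 1 - i) * (k - d + j).choose j : ℕ) : ℤ) := by
  rw [show (d : ℤ) - j = (d - j : ℕ) by omega, show (d : ℤ) - 1 - i = (d - 1 - i : ℕ) by omega,
    show (k : ℤ) - d + j = (k - d + j : ℕ) by omega, ch_natCast, ch_natCast, Nat.cast_mul]

/-- For `d ≥ 2`, `m = ⌊d/2⌋`, `k ≥ d` and `0 ≤ i ≤ m-1`, the number of `i`-faces
of the cyclic `d`-polytope with `k+1` vertices,
`φ_i(d,k) = ∑_{j=0}^m [C(j,d-1-i) + C(d-j,d-1-i)] C(k-d+j,j) - [d even] C(m,2m-1-i) C(k-m,m)`,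
simplifies to `C(k+1, i+1)`. -/
theorem phi_simplification (d m k i : ℕ) (hd2 : 2 ≤ d) (hm : m = d / 2)
    (hk : d ≤ k) (hi : i ≤ m - 1) :
    (∑ j ∈ Finset.range (m + 1),
        (ch (j : ℤ) ((d : ℤ) - 1 - i) + ch ((d : ℤ) - j) ((d : ℤ) - 1 - i)) *
          ch ((k : ℤ) - d + j) (j : ℤ))
      - (if Even d then 1 else 0) * ch (m : ℤ) (2 * (m : ℤ) - 1 - i) * ch ((k : ℤ) - m) (m : ℤ)
      = ch ((k : ℤ) + 1) ((i : ℤ) + 1) := by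
  have hi' : i + 1 ≤ m := by omega
  have hterm : ∀ j ∈ range (m + 1),
      (ch (j : ℤ) ((d : ℤ) - 1 - i) + ch ((d : ℤ) - j) ((d : ℤ) - 1 - i)) *
          ch ((k : ℤ) - d + j) (j : ℤ) =
        (if j = m then (if Even d then 1 else 0) * ch (m : ℤ) (2 * (m : ℤ) - 1 - i) *
          ch ((k : ℤ) - m) (m : ℤ) else 0) +
        (((d - j).choose (d - 1 - i) * (k - d + j).choose j : ℕ) : ℤ) := by
    intro j hj
    rw [mem_range] at hj
    rw [add_mul, ch_mul_ch_eq_ite hm hi' (by omega),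
      ch_sub_mul_ch_eq_natCast (by omega) hk (by omega)]
  have hsum :=
    Nat.sum_range_add_sub_choose_mul_add_choose (k - d) (d - 1 - i) (i + 1) hi' (by omega)
  rw [show d - 1 - i + (i + 1) = d by omega,
    show k - d + (d - 1 - i) + (i + 1) + 1 = k + 1 by omega] at hsum
  rw [sum_congr rfl hterm, sum_add_distrib, sum_ite_eq', if_pos (self_mem_range_succ m),
    ← Nat.cast_sum, hsum, show (k : ℤ) + 1 = (k + 1 : ℕ) by push_cast; ring,
    show (i : ℤ) + 1 = (i + 1 : ℕ) by push_cast; ring, ch_natCast]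
  ring
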